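/- arXiv:2103.01089 — 3 statements merged into one kernel-verified Lean document; each statement's English description precedes it below -/
import Mathlib

section
/- Suppose two sequences of GCN weights $(W_t^{(l)})$ and $(W_{t+1}^{(l)})$ satisfy $W_{t+1}^{(l)} = W_t^{(l)} - \alpha_t G_t^{(l)}$ with $\sum_{l=0}^{L-1}\|G_t^{(l)}\| \leq C_g$, and all weights satisfy $\|W^{(l)}\| \leq C_\theta$. With the GCN forward rule and assumptions above, for every node $i$ and layer $l \geq 1$: $\max_{i} \|h_{i,t+1}^{(l)} - h_{i,t}^{(l)}\| \leq \alpha_t G^{l-1} C_\sigma C_x C_g$, where $G = C_\sigma C_\theta \bar{A}\bar{D}$, $h_{i,t}^{(l)}$ denotes the layer-$l$ embedding computed with weights $W_t^{(0)},\dots,W_t^{(l-1)}$. -/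
open Finset

theorem stmt11 {d : ℕ} {V : Type*} [Fintype V] (L : ℕ)
    (N : V → Finset V) (a : V → V → ℝ) (x : V → EuclideanSpace ℝ (Fin d))
    (W W' Gt : ℕ → EuclideanSpace ℝ (Fin d) →L[ℝ] EuclideanSpace ℝ (Fin d))
    (σ : EuclideanSpace ℝ (Fin d) → EuclideanSpace ℝ (Fin d))
    (Cσ Cθ Abar Dbar Cx Cg G α : ℝ)
    (hCσ : 0 ≤ Cσ) (hCθ : 0 ≤ Cθ) (hAbar : 0 ≤ Abar) (hDbar : 0 ≤ Dbar)
    (hCx : 0 ≤ Cx) (hCg : 0 ≤ Cg) (hα : 0 < α)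
    (hG : G = Cσ * Cθ * Abar * Dbar)
    (hσ0 : σ 0 = 0) (hσ : ∀ u v, ‖σ u - σ v‖ ≤ Cσ * ‖u - v‖)
    (hW : ∀ l, ‖W l‖ ≤ Cθ) (hW' : ∀ l, ‖W' l‖ ≤ Cθ)
    (hupd : ∀ l < L, W' l = W l - α • Gt l)
    (hg : ∑ l ∈ Finset.range L, ‖Gt l‖ ≤ Cg)
    (ha : ∀ v i, |a v i| ≤ Abar)
    (hD : ∀ v, ((N v).card : ℝ) ≤ Dbar)
    (hx : ∀ v, ‖∑ i ∈ N v, a v i • x i‖ ≤ Cx)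
    (h h' : ℕ → V → EuclideanSpace ℝ (Fin d))
    (h0 : ∀ v, h 0 v = x v) (h0' : ∀ v, h' 0 v = x v)
    (hrec : ∀ l v, h (l + 1) v = σ (W l (∑ i ∈ N v, a v i • h l i)))
    (hrec' : ∀ l v, h' (l + 1) v = σ (W' l (∑ i ∈ N v, a v i • h' l i))) :
    ∀ l, 1 ≤ l → l ≤ L → ∀ i,
      ‖h' l i - h l i‖ ≤ α * G ^ (l - 1) * Cσ * Cx * Cg := by
  have hGnn : 0 ≤ G := by rw [hG]; positivity
  have hσn : ∀ u, ‖σ u‖ ≤ Cσ * ‖u‖ := by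
    intro u; simpa [hσ0] using hσ u 0
  have key : ∀ (f : V → EuclideanSpace ℝ (Fin d)) (C : ℝ), 0 ≤ C →
      (∀ i, ‖f i‖ ≤ C) → ∀ v, ‖∑ i ∈ N v, a v i • f i‖ ≤ Abar * Dbar * C := by
    intro f C hC hf v
    calc ‖∑ i ∈ N v, a v i • f i‖ ≤ ∑ i ∈ N v, ‖a v i • f i‖ := norm_sum_le _ _
      _ ≤ ∑ _i ∈ N v, Abar * C := by
          apply Finset.sum_le_sum
          intro i _
          rw [norm_smul]
          exact mul_le_mul (by simpa using ha v i) (hf i) (norm_nonneg _) hAbar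
      _ = (N v).card * (Abar * C) := by rw [Finset.sum_const, nsmul_eq_mul]
      _ ≤ Dbar * (Abar * C) := mul_le_mul_of_nonneg_right (hD v) (by positivity)
      _ = Abar * Dbar * C := by ring
  have hnorm' : ∀ l v, ‖∑ i ∈ N v, a v i • h' l i‖ ≤ G ^ l * Cx := by
    intro l
    induction l with
    | zero => intro v; simpa [h0'] using hx v
    | succ l ih =>
      intro v
      have hfi : ∀ i, ‖h' (l+1) i‖ ≤ Cσ * (Cθ * (G ^ l * Cx)) := by
        intro i
        rw [hrec']
        calc ‖σ (W' l (∑ j ∈ N i, a i j • h' l j))‖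
            ≤ Cσ * ‖W' l (∑ j ∈ N i, a i j • h' l j)‖ := hσn _
          _ ≤ Cσ * (Cθ * (G ^ l * Cx)) := by
              apply mul_le_mul_of_nonneg_left _ hCσ
              calc ‖W' l (∑ j ∈ N i, a i j • h' l j)‖
                  ≤ ‖W' l‖ * ‖∑ j ∈ N i, a i j • h' l j‖ := (W' l).le_opNorm _
                _ ≤ Cθ * (G ^ l * Cx) := mul_le_mul (hW' l) (ih i) (norm_nonneg _) hCθ
      calc ‖∑ i ∈ N v, a v i • h' (l+1) i‖
          ≤ Abar * Dbar * (Cσ * (Cθ * (G ^ l * Cx))) := key _ _ (by positivity) hfi v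
        _ = G ^ (l+1) * Cx := by rw [hG]; ring
  have main : ∀ m, m + 1 ≤ L → ∀ v,
      ‖h' (m+1) v - h (m+1) v‖
        ≤ α * Cσ * Cx * G ^ m * ∑ k ∈ Finset.range (m+1), ‖Gt k‖ := by
    intro m
    induction m with
    | zero =>
      intro hm v
      have hup := hupd 0 (by omega)
      have hs : (∑ i ∈ N v, a v i • h' 0 i) = ∑ i ∈ N v, a v i • h 0 i := by
        simp [h0, h0']
      rw [hrec', hrec, hs, hup]
      set s := ∑ i ∈ N v, a v i • h 0 i with hsdef
      have hsC : ‖s‖ ≤ Cx := by rw [hsdef]; simpa [h0] using hx v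
      have heq : (W 0 - α • Gt 0) s - W 0 s = -(α • Gt 0 s) := by
        simp only [ContinuousLinearMap.sub_apply, ContinuousLinearMap.smul_apply]; abel
      calc ‖σ ((W 0 - α • Gt 0) s) - σ (W 0 s)‖
          ≤ Cσ * ‖(W 0 - α • Gt 0) s - W 0 s‖ := hσ _ _
        _ = Cσ * (α * ‖Gt 0 s‖) := by
            rw [heq, norm_neg, norm_smul, Real.norm_eq_abs, abs_of_pos hα]
        _ ≤ Cσ * (α * (‖Gt 0‖ * Cx)) := by
            apply mul_le_mul_of_nonneg_left _ hCσ
            apply mul_le_mul_of_nonneg_left _ hα.le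
            calc ‖Gt 0 s‖ ≤ ‖Gt 0‖ * ‖s‖ := (Gt 0).le_opNorm _
              _ ≤ ‖Gt 0‖ * Cx := mul_le_mul_of_nonneg_left hsC (norm_nonneg _)
        _ = α * Cσ * Cx * G ^ 0 * ∑ k ∈ Finset.range 1, ‖Gt k‖ := by
            rw [Finset.sum_range_one, pow_zero]; ring
    | succ m ih =>
      intro hm v
      have ihv := ih (by omega)
      have hup := hupd (m+1) (by omega)
      rw [hrec', hrec, hup]
      set s' := ∑ i ∈ N v, a v i • h' (m+1) i with hs'def
      set s := ∑ i ∈ N v, a v i • h (m+1) i with hsdef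
      set Sm := ∑ k ∈ Finset.range (m+1), ‖Gt k‖ with hSdef
      have hSnn : 0 ≤ Sm := Finset.sum_nonneg fun k _ => norm_nonneg _
      have hs'C : ‖s'‖ ≤ G ^ (m+1) * Cx := hnorm' (m+1) v
      have hdiff : ‖s' - s‖ ≤ Abar * Dbar * (α * Cσ * Cx * G ^ m * Sm) := by
        have heq : s' - s = ∑ i ∈ N v, a v i • (h' (m+1) i - h (m+1) i) := by
          rw [hs'def, hsdef, ← Finset.sum_sub_distrib]
          exact Finset.sum_congr rfl fun i _ => (smul_sub _ _ _).symm
        rw [heq]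
        exact key _ _ (by positivity) (fun i => ihv i) v
      have heq2 : (W (m+1) - α • Gt (m+1)) s' - W (m+1) s
          = W (m+1) (s' - s) - α • Gt (m+1) s' := by
        simp only [ContinuousLinearMap.sub_apply, ContinuousLinearMap.smul_apply, map_sub]
        abel
      calc ‖σ ((W (m+1) - α • Gt (m+1)) s') - σ (W (m+1) s)‖
          ≤ Cσ * ‖(W (m+1) - α • Gt (m+1)) s' - W (m+1) s‖ := hσ _ _
        _ ≤ Cσ * (‖W (m+1) (s' - s)‖ + ‖α • Gt (m+1) s'‖) := by
            apply mul_le_mul_of_nonneg_left _ hCσ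
            rw [heq2]; exact norm_sub_le _ _
        _ ≤ Cσ * (Cθ * (Abar * Dbar * (α * Cσ * Cx * G ^ m * Sm))
              + α * (‖Gt (m+1)‖ * (G ^ (m+1) * Cx))) := by
            apply mul_le_mul_of_nonneg_left _ hCσ
            apply add_le_add
            · calc ‖W (m+1) (s' - s)‖ ≤ ‖W (m+1)‖ * ‖s' - s‖ := (W (m+1)).le_opNorm _
                _ ≤ Cθ * (Abar * Dbar * (α * Cσ * Cx * G ^ m * Sm)) :=
                    mul_le_mul (hW _) hdiff (norm_nonneg _) hCθ
            · rw [norm_smul, Real.norm_eq_abs, abs_of_pos hα]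
              apply mul_le_mul_of_nonneg_left _ hα.le
              calc ‖Gt (m+1) s'‖ ≤ ‖Gt (m+1)‖ * ‖s'‖ := (Gt (m+1)).le_opNorm _
                _ ≤ ‖Gt (m+1)‖ * (G ^ (m+1) * Cx) :=
                    mul_le_mul_of_nonneg_left hs'C (norm_nonneg _)
        _ = α * Cσ * Cx * G ^ (m+1) * ∑ k ∈ Finset.range (m+1+1), ‖Gt k‖ := by
            rw [Finset.sum_range_succ, ← hSdef, hG]; ring
  intro l hl hL i
  obtain ⟨m, rfl⟩ : ∃ m, l = m + 1 := ⟨l - 1, by omega⟩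
  have hmain := main m hL i
  have hsum_le : ∑ k ∈ Finset.range (m+1), ‖Gt k‖ ≤ Cg :=
    le_trans (Finset.sum_le_sum_of_subset_of_nonneg (Finset.range_subset_range.2 hL)
      fun k _ _ => norm_nonneg _) hg
  calc ‖h' (m+1) i - h (m+1) i‖
      ≤ α * Cσ * Cx * G ^ m * ∑ k ∈ Finset.range (m+1), ‖Gt k‖ := hmain
    _ ≤ α * Cσ * Cx * G ^ m * Cg := by
        apply mul_le_mul_of_nonneg_left hsum_le (by positivity)
    _ = α * G ^ (m + 1 - 1) * Cσ * Cx * Cg := by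
        simp only [Nat.add_sub_cancel]; ring
end

section
/- Let $(\mathbb{E}[r_{i,t}])_{i \in [K], t \in [T]}$ be expected rewards, and suppose the total variation satisfies $\sum_{t=1}^{T-1} \max_{i\in[K]} |\mathbb{E}[r_{i,t+1}] - \mathbb{E}[r_{i,t}]| \leq V$. Partition $[T]$ into consecutive batches $\mathcal{T}_1,\dots,\mathcal{T}_s$. For batch $m$, let $V_m = \sum_{t\in\mathcal{T}_m} \max_i |\mathbb{E}[r_{i,t+1}] - \mathbb{E}[r_{i,t}]|$, let $N^*_t \subseteq [K]$ with $|N^*_t| = k$ maximize $\sum_{i \in N} \mathbb{E}[r_{i,t}]$ at each $t$, and let $N_0$ maximize $\sum_{t \in \mathcal{T}_m} \sum_{i\in N}\mathbb{E}[r_{i,t}]$ over size-$k$ subsets $N$. Then for every $t \in \mathcal{T}_m$: $\sum_{i\in N_t^*}\mathbb{E}[r_{i,t}] - \sum_{i\in N_0}\mathbb{E}[r_{i,t}] \leq 2k V_m$. -/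
open Finset

private lemma tele17 (f : ℕ → ℝ) {t u : ℕ} (h : t ≤ u) :
    f u - f t = ∑ w ∈ Finset.Ico t u, (f (w + 1) - f w) := by
  induction u, h using Nat.le_induction with
  | base => simp
  | succ n hn ih =>
      rw [Finset.sum_Ico_succ_top (by omega), ← ih]; ring

theorem stmt17 {K : ℕ} (hK : 0 < K) (r : Fin K → ℕ → ℝ) (k : ℕ)
    (a b : ℕ) (Nstar : ℕ → Finset (Fin K)) (N0 : Finset (Fin K))
    (hNstar : ∀ t, (Nstar t).card = k ∧
      ∀ N : Finset (Fin K), N.card = k → ∑ i ∈ N, r i t ≤ ∑ i ∈ Nstar t, r i t)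
    (hN0 : N0.card = k ∧ ∀ N : Finset (Fin K), N.card = k →
      ∑ t ∈ Finset.Icc a b, ∑ i ∈ N, r i t
        ≤ ∑ t ∈ Finset.Icc a b, ∑ i ∈ N0, r i t) :
    ∀ t ∈ Finset.Icc a b,
      (∑ i ∈ Nstar t, r i t) - ∑ i ∈ N0, r i t
        ≤ 2 * k * ∑ u ∈ Finset.Icc a b,
            (Finset.univ.sup' (Finset.univ_nonempty_iff.mpr ⟨⟨0, hK⟩⟩)
              fun i => |r i (u + 1) - r i u|) := by
  intro t ht
  have hne : (Finset.univ : Finset (Fin K)).Nonempty :=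
    Finset.univ_nonempty_iff.mpr ⟨⟨0, hK⟩⟩
  set V : ℝ := ∑ u ∈ Finset.Icc a b,
      (Finset.univ.sup' hne fun i => |r i (u + 1) - r i u|) with hV
  -- pointwise bound
  have key : ∀ (i : Fin K) (t' u' : ℕ), t' ∈ Finset.Icc a b → u' ∈ Finset.Icc a b →
      r i t' - r i u' ≤ V := by
    intro i t' u' ht' hu'
    simp only [Finset.mem_Icc] at ht' hu'
    have hbound : ∀ x y : ℕ, x ≤ y → a ≤ x → y ≤ b → |r i y - r i x| ≤ V := by
      intro x y hxy hax hyb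
      rw [tele17 (r i) hxy]
      calc |∑ w ∈ Finset.Ico x y, (r i (w + 1) - r i w)|
          ≤ ∑ w ∈ Finset.Ico x y, |r i (w + 1) - r i w| :=
            Finset.abs_sum_le_sum_abs _ _
        _ ≤ ∑ w ∈ Finset.Ico x y,
              (Finset.univ.sup' hne fun j => |r j (w + 1) - r j w|) :=
            Finset.sum_le_sum fun w _ =>
              Finset.le_sup' (fun j => |r j (w + 1) - r j w|) (Finset.mem_univ i)
        _ ≤ V := by
            apply Finset.sum_le_sum_of_subset_of_nonneg
            · intro w hw
              simp only [Finset.mem_Ico] at hw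
              simp only [Finset.mem_Icc]
              omega
            · intro w _ _
              obtain ⟨j, -, hj⟩ := Finset.exists_mem_eq_sup' hne
                (fun j => |r j (w + 1) - r j w|)
              rw [hj]; positivity
    rcases le_total u' t' with h | h
    · have := hbound u' t' h hu'.1 ht'.2
      exact (le_abs_self _).trans this
    · have := hbound t' u' h ht'.1 hu'.2
      rw [abs_sub_comm] at this
      exact (le_abs_self _).trans this
  have keyset : ∀ (N : Finset (Fin K)) (t' u' : ℕ), N.card = k →
      t' ∈ Finset.Icc a b → u' ∈ Finset.Icc a b →
      ∑ i ∈ N, r i t' - ∑ i ∈ N, r i u' ≤ k * V := by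
    intro N t' u' hcard ht' hu'
    rw [← Finset.sum_sub_distrib]
    calc ∑ i ∈ N, (r i t' - r i u') ≤ ∑ _i ∈ N, V :=
          Finset.sum_le_sum fun i _ => key i t' u' ht' hu'
      _ = k * V := by rw [Finset.sum_const, hcard, nsmul_eq_mul]
  -- exists u where N0 beats Nstar t
  have hsum : ∑ u ∈ Finset.Icc a b, ∑ i ∈ Nstar t, r i u
      ≤ ∑ u ∈ Finset.Icc a b, ∑ i ∈ N0, r i u := hN0.2 _ (hNstar t).1
  obtain ⟨u, hu, hule⟩ : ∃ u ∈ Finset.Icc a b,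
      ∑ i ∈ Nstar t, r i u ≤ ∑ i ∈ N0, r i u :=
    Finset.exists_le_of_sum_le ⟨t, ht⟩ hsum
  have h1 := keyset (Nstar t) t u (hNstar t).1 ht hu
  have h2 := keyset N0 u t hN0.1 hu ht
  have : (2 : ℝ) * k * V = k * V + k * V := by ring
  linarith
end

section
/- Under the GCN training assumptions (activation $C_\sigma$-Lipschitz with $\sigma(0)=0$, spectral norms $\|W_t^{(l)}\| \leq C_\theta$, total gradient norm $\leq C_g$, learning rate $\alpha_t = 1/t$, edge weights bounded by $\bar{A}$, degree bounded by $\bar{D}$, input aggregate bound $C_x$), the expected reward sequence $\mathbb{E}[\tilde{r}_{i,t}]$ of the clipped reward $\tilde{r}_{i,t} = \mathrm{ReLU}(2\langle z_{i,t}^{(l)}, \bar{z}_t\rangle - \|z_{i,t}^{(l)}\|^2)$ satisfies for all $T \geq 2$: $\sum_{t=1}^{T} |\mathbb{E}[\tilde{r}_{i,t+1}] - \mathbb{E}[\tilde{r}_{i,t}]| \leq 12\, G^{2(l-1)} C_\sigma^2 C_x^2 \bar{A}^2 C_\theta C_g \ln T$, where $G = C_\sigma C_\theta \bar{A}\bar{D}$.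 -/
/-!
With `C` the common bound on the embeddings and `Δ / t` the bound on their drift at step `t`,
the clipped reward moves by at most `4 C Δ / t` at step `t`, pointwise and hence in expectation.
Summing, `∑_{t ≤ T} 1/t ≤ 1 + log T ≤ 3 log T` for `T ≥ 2` gives the bound `12 C Δ log T`.
-/

open Finset

noncomputable def clippedReward {E : Type*} [NormedAddCommGroup E] [InnerProductSpace ℝ E]
    (u v : E) : ℝ :=
  max (2 * (inner ℝ u v : ℝ) - ‖u‖ ^ 2) 0

section Reward

variable {E : Type*} [NormedAddCommGroup E] [InnerProductSpace ℝ E]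

lemma two_inner_sub_norm_sq_eq (u v : E) :
    2 * (inner ℝ u v : ℝ) - ‖u‖ ^ 2 = ‖v‖ ^ 2 - ‖u - v‖ ^ 2 := by
  rw [norm_sub_sq_real]; ring

lemma two_inner_sub_norm_sq_sub_eq (u v x w : E) :
    (2 * (inner ℝ u v : ℝ) - ‖u‖ ^ 2) - (2 * (inner ℝ x w : ℝ) - ‖x‖ ^ 2)
      = -2 * (inner ℝ u (w - v) : ℝ) - 2 * (inner ℝ (x - u) (v - u) : ℝ)
        - 2 * (inner ℝ (x - u) (w - v) : ℝ) + ‖x - u‖ ^ 2 := by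
  simp only [← real_inner_self_eq_norm_sq, inner_sub_left, inner_sub_right,
    real_inner_comm u x, real_inner_comm v u]
  ring

/-- On the set where the reward is positive, `‖u - v‖ < ‖v‖ ≤ C`, so there the unclipped reward
has gradient of norm at most `4C` rather than `6C`. -/
lemma clippedReward_sub_le {C δ : ℝ} {u v x w : E}
    (hu : ‖u‖ ≤ C) (hv : ‖v‖ ≤ C)
    (hxu : ‖x - u‖ ≤ δ) (hwv : ‖w - v‖ ≤ δ) :
    clippedReward u v - clippedReward x w ≤ 4 * C * δ := by
  have hC : 0 ≤ C := (norm_nonneg u).trans hu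
  have hδ : 0 ≤ δ := (norm_nonneg _).trans hxu
  have hb : 0 ≤ clippedReward x w := le_max_right _ _
  by_cases ha : 2 * (inner ℝ u v : ℝ) - ‖u‖ ^ 2 ≤ 4 * C * δ
  · have : clippedReward u v ≤ 4 * C * δ := max_le ha (by positivity)
    linarith
  push Not at ha
  have huv : ‖v - u‖ ≤ C - 2 * δ := by
    have hv2 : ‖v‖ ^ 2 ≤ C ^ 2 := pow_le_pow_left₀ (norm_nonneg _) hv 2
    rw [two_inner_sub_norm_sq_eq] at ha
    have hsq : ‖u - v‖ ^ 2 < C ^ 2 - 4 * C * δ := by linarith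
    have hpos : 0 ≤ C - 2 * δ := by
      by_contra! hneg
      nlinarith [sq_nonneg ‖u - v‖, mul_le_mul_of_nonneg_left hneg.le hC]
    rw [norm_sub_rev]
    exact le_of_pow_le_pow_left₀ two_ne_zero hpos (by nlinarith)
  have h1 := (abs_le.mp <| (abs_real_inner_le_norm u (w - v)).trans
    (mul_le_mul hu hwv (norm_nonneg _) hC)).1
  have h2 := (abs_le.mp <| (abs_real_inner_le_norm (x - u) (v - u)).trans
    (mul_le_mul hxu huv (norm_nonneg _) hδ)).1
  have h3 := (abs_le.mp <| (abs_real_inner_le_norm (x - u) (w - v)).trans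
    (mul_le_mul hxu hwv (norm_nonneg _) hδ)).1
  have h4 : ‖x - u‖ ^ 2 ≤ δ ^ 2 := pow_le_pow_left₀ (norm_nonneg _) hxu 2
  have hdiff := two_inner_sub_norm_sq_sub_eq u v x w
  have hmax : clippedReward u v = 2 * (inner ℝ u v : ℝ) - ‖u‖ ^ 2 :=
    max_eq_left (ha.le.trans' (by positivity))
  have : 2 * (inner ℝ x w : ℝ) - ‖x‖ ^ 2 ≤ clippedReward x w := le_max_left _ _
  nlinarith

lemma abs_clippedReward_sub_le {C δ : ℝ} {u v x w : E}
    (hu : ‖u‖ ≤ C) (hv : ‖v‖ ≤ C) (hx : ‖x‖ ≤ C) (hw : ‖w‖ ≤ C)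
    (hxu : ‖x - u‖ ≤ δ) (hwv : ‖w - v‖ ≤ δ) :
    |clippedReward x w - clippedReward u v| ≤ 4 * C * δ :=
  abs_sub_le_iff.mpr
    ⟨clippedReward_sub_le hx hw (by rwa [norm_sub_rev]) (by rwa [norm_sub_rev]),
      clippedReward_sub_le hu hv hxu hwv⟩

end Reward

lemma abs_sum_mul_sub_sum_mul_le {Ω : Type*} [Fintype Ω] {P f g : Ω → ℝ} {ε : ℝ}
    (hP0 : ∀ ω, 0 ≤ P ω) (hP1 : ∑ ω, P ω = 1) (hfg : ∀ ω, |f ω - g ω| ≤ ε) :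
    |∑ ω, P ω * f ω - ∑ ω, P ω * g ω| ≤ ε :=
  calc |∑ ω, P ω * f ω - ∑ ω, P ω * g ω|
      = |∑ ω, P ω * (f ω - g ω)| := by simp only [mul_sub, sum_sub_distrib]
    _ ≤ ∑ ω, |P ω * (f ω - g ω)| := abs_sum_le_sum_abs _ _
    _ ≤ ∑ ω, P ω * ε := by
        gcongr with ω
        rw [abs_mul, abs_of_nonneg (hP0 ω)]
        exact mul_le_mul_of_nonneg_left (hfg ω) (hP0 ω)
    _ = ε := by rw [← sum_mul, hP1, one_mul]

lemma sum_Icc_inv_le_three_mul_log {T : ℕ} (hT : 2 ≤ T) :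
    ∑ t ∈ Icc 1 T, (t : ℝ)⁻¹ ≤ 3 * Real.log T := by
  have hH : ∑ t ∈ Icc 1 T, (t : ℝ)⁻¹ ≤ 1 + Real.log T := by
    simpa [harmonic_eq_sum_Icc] using harmonic_le_one_add_log T
  have hlog : Real.log 2 ≤ Real.log T := Real.log_le_log two_pos (by exact_mod_cast hT)
  linarith [Real.log_two_gt_d9]

lemma sum_Icc_abs_sub_le_of_abs_sub_le_div {r : ℕ → ℝ} {K : ℝ}
    (hr : ∀ t, 1 ≤ t → |r (t + 1) - r t| ≤ K / t) {T : ℕ} (hT : 2 ≤ T) :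
    ∑ t ∈ Icc 1 T, |r (t + 1) - r t| ≤ 3 * K * Real.log T := by
  have hK : 0 ≤ K := by simpa using (abs_nonneg _).trans (hr 1 le_rfl)
  calc ∑ t ∈ Icc 1 T, |r (t + 1) - r t|
      ≤ ∑ t ∈ Icc 1 T, K * (t : ℝ)⁻¹ :=
        sum_le_sum fun t ht => (hr t (mem_Icc.mp ht).1).trans_eq (div_eq_mul_inv _ _)
    _ = K * ∑ t ∈ Icc 1 T, (t : ℝ)⁻¹ := (mul_sum _ _ _).symm
    _ ≤ K * (3 * Real.log T) := mul_le_mul_of_nonneg_left (sum_Icc_inv_le_three_mul_log hT) hK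
    _ = 3 * K * Real.log T := by ring

theorem stmt18_general {d : ℕ} {Ω : Type*} [Fintype Ω]
    (P : Ω → ℝ) (hP0 : ∀ ω, 0 ≤ P ω) (hP1 : ∑ ω, P ω = 1)
    (l : ℕ)
    (Cσ Cθ Abar Dbar Cx Cg : ℝ)
    (z zbar : ℕ → Ω → EuclideanSpace ℝ (Fin d))
    (hzb : ∀ t ω, ‖z t ω‖ ≤ (Cσ * Cθ * Abar * Dbar) ^ (l - 1) * Abar * Cσ * Cθ * Cx)
    (hzbarb : ∀ t ω, ‖zbar t ω‖ ≤ (Cσ * Cθ * Abar * Dbar) ^ (l - 1) * Abar * Cσ * Cθ * Cx)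
    (hdz : ∀ t ω, 1 ≤ t →
      ‖z (t + 1) ω - z t ω‖
        ≤ (1 / (t : ℝ)) * (Cσ * Cθ * Abar * Dbar) ^ (l - 1) * Abar * Cσ * Cx * Cg)
    (hdzbar : ∀ t ω, 1 ≤ t →
      ‖zbar (t + 1) ω - zbar t ω‖
        ≤ (1 / (t : ℝ)) * (Cσ * Cθ * Abar * Dbar) ^ (l - 1) * Abar * Cσ * Cx * Cg)
    (T : ℕ) (hT : 2 ≤ T) :
    ∑ t ∈ Finset.Icc 1 T,
        |(∑ ω, P ω *
            max (2 * (inner ℝ (z (t + 1) ω) (zbar (t + 1) ω) : ℝ) - ‖z (t + 1) ω‖ ^ 2) 0)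
          - (∑ ω, P ω *
            max (2 * (inner ℝ (z t ω) (zbar t ω) : ℝ) - ‖z t ω‖ ^ 2) 0)|
      ≤ 12 * (Cσ * Cθ * Abar * Dbar) ^ (2 * (l - 1)) * Cσ ^ 2 * Cx ^ 2
          * Abar ^ 2 * Cθ * Cg * Real.log T := by
  set G := Cσ * Cθ * Abar * Dbar
  set C := G ^ (l - 1) * Abar * Cσ * Cθ * Cx
  set Δ := G ^ (l - 1) * Abar * Cσ * Cx * Cg
  have hstep : ∀ t, 1 ≤ t →
      |∑ ω, P ω * clippedReward (z (t + 1) ω) (zbar (t + 1) ω)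
        - ∑ ω, P ω * clippedReward (z t ω) (zbar t ω)| ≤ 4 * C * Δ / t := by
    intro t ht
    refine abs_sum_mul_sub_sum_mul_le hP0 hP1 fun ω => ?_
    refine (abs_clippedReward_sub_le (hzb t ω) (hzbarb t ω) (hzb (t + 1) ω) (hzbarb (t + 1) ω)
      (hdz t ω ht) (hdzbar t ω ht)).trans_eq ?_
    ring
  refine (sum_Icc_abs_sub_le_of_abs_sub_le_div
    (r := fun t => ∑ ω, P ω * clippedReward (z t ω) (zbar t ω)) hstep hT).trans_eq ?_
  rw [two_mul, pow_add]
  ring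

theorem stmt18 {d : ℕ} {Ω : Type*} [Fintype Ω]
    (P : Ω → ℝ) (hP0 : ∀ ω, 0 ≤ P ω) (hP1 : ∑ ω, P ω = 1)
    (l : ℕ) (hl : 1 ≤ l)
    (Cσ Cθ Abar Dbar Cx Cg : ℝ)
    (hCσ : 0 ≤ Cσ) (hCθ : 0 ≤ Cθ) (hA : 0 ≤ Abar) (hD : 0 ≤ Dbar)
    (hCx : 0 ≤ Cx) (hCg : 0 ≤ Cg)
    (z zbar : ℕ → Ω → EuclideanSpace ℝ (Fin d))
    (hzb : ∀ t ω, ‖z t ω‖ ≤ (Cσ * Cθ * Abar * Dbar) ^ (l - 1) * Abar * Cσ * Cθ * Cx)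
    (hzbarb : ∀ t ω, ‖zbar t ω‖ ≤ (Cσ * Cθ * Abar * Dbar) ^ (l - 1) * Abar * Cσ * Cθ * Cx)
    (hdz : ∀ t ω, 1 ≤ t →
      ‖z (t + 1) ω - z t ω‖
        ≤ (1 / (t : ℝ)) * (Cσ * Cθ * Abar * Dbar) ^ (l - 1) * Abar * Cσ * Cx * Cg)
    (hdzbar : ∀ t ω, 1 ≤ t →
      ‖zbar (t + 1) ω - zbar t ω‖
        ≤ (1 / (t : ℝ)) * (Cσ * Cθ * Abar * Dbar) ^ (l - 1) * Abar * Cσ * Cx * Cg)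
    (T : ℕ) (hT : 2 ≤ T) :
    ∑ t ∈ Finset.Icc 1 T,
        |(∑ ω, P ω *
            max (2 * (inner ℝ (z (t + 1) ω) (zbar (t + 1) ω) : ℝ) - ‖z (t + 1) ω‖ ^ 2) 0)
          - (∑ ω, P ω *
            max (2 * (inner ℝ (z t ω) (zbar t ω) : ℝ) - ‖z t ω‖ ^ 2) 0)|
      ≤ 12 * (Cσ * Cθ * Abar * Dbar) ^ (2 * (l - 1)) * Cσ ^ 2 * Cx ^ 2
          * Abar ^ 2 * Cθ * Cg * Real.log T :=
  stmt18_general P hP0 hP1 l Cσ Cθ Abar Dbar Cx Cg z zbar hzb hzbarb hdz hdzbar T hT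
end
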